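/- The Boolean-valued powerset, defined for x = ⟨α, A, b⟩ as the set indexed by functions χ : α → 𝔹, with indexing function χ ↦ ⟨α, A, χ⟩ and truth function χ ↦ (⟨α, A, χ⟩ ⊆ᴮ x), satisfies the powerset axiom: for all Γ ≤ ⊤ and all z : bSet 𝔹, Γ ≤ (z ∈ᴮ P(x)) ⇔ (z ⊆ᴮ x). -/
import Mathlib


universe u

/-- Boolean-valued sets over a complete Boolean algebra `𝔹`. -/
inductive bSet (𝔹 : Type u) [CompleteBooleanAlgebra 𝔹] : Type (u + 1)
  | mk (α : Type u) (A : α → bSet 𝔹) (B : α → 𝔹) : bSet 𝔹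

namespace bSet

variable {𝔹 : Type u} [CompleteBooleanAlgebra 𝔹]

/-- Boolean-valued equality:
`⟨α,A,B⟩ =ᴮ ⟨α\u0027,A\u0027,B\u0027⟩ := (⨅ a, B a ⟹ ⨆ a\u0027, B\u0027 a\u0027 ⊓ (A a =ᴮ A\u0027 a\u0027)) ⊓ (symmetrically)`. -/
def bvEq : bSet 𝔹 → bSet 𝔹 → 𝔹
  | ⟨_, A, B⟩, ⟨_, A', B'⟩ =>
      (⨅ a, B a ⇨ ⨆ a', B' a' ⊓ bvEq (A a) (A' a')) ⊓
      (⨅ a', B' a' ⇨ ⨆ a, B a ⊓ bvEq (A a) (A' a'))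

/-- Boolean-valued membership: `x ∈ᴮ ⟨α,A,B⟩ := ⨆ a, B a ⊓ (x =ᴮ A a)`. -/
def bvMem (x : bSet 𝔹) : bSet 𝔹 → 𝔹
  | ⟨_, A, B⟩ => ⨆ a, B a ⊓ bvEq x (A a)

/-- Boolean-valued subset. -/
def bvSubset : bSet 𝔹 → bSet 𝔹 → 𝔹
  | ⟨_, A, B⟩, y => ⨅ a, B a ⇨ bvMem (A a) y

/-- Boolean-valued biimplication. -/
def biimp (a b : 𝔹) : 𝔹 := (a ⇨ b) ⊓ (b ⇨ a)

lemma bvEq_le1 {α α' : Type u} {A : α → bSet 𝔹} {B : α → 𝔹} {A' : α' → bSet 𝔹}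
    {B' : α' → 𝔹} (a : α) :
    bvEq (⟨α, A, B⟩ : bSet 𝔹) ⟨α', A', B'⟩ ≤ B a ⇨ ⨆ a', B' a' ⊓ bvEq (A a) (A' a') := by
  simp only [bvEq]; exact inf_le_left.trans (iInf_le _ a)

lemma bvEq_le2 {α α' : Type u} {A : α → bSet 𝔹} {B : α → 𝔹} {A' : α' → bSet 𝔹}
    {B' : α' → 𝔹} (a' : α') :
    bvEq (⟨α, A, B⟩ : bSet 𝔹) ⟨α', A', B'⟩ ≤ B' a' ⇨ ⨆ a, B a ⊓ bvEq (A a) (A' a') := by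
  simp only [bvEq]; exact inf_le_right.trans (iInf_le _ a')

lemma bvEq_refl : ∀ (x : bSet 𝔹), (⊤ : 𝔹) ≤ bvEq x x
  | ⟨α, A, B⟩ => by
    simp only [bvEq]
    refine le_inf ?_ ?_ <;>
    · refine le_iInf fun a => le_himp_iff.mpr ?_
      refine le_trans ?_ (le_iSup _ a)
      exact le_inf inf_le_right (le_trans le_top (bvEq_refl (A a)))

lemma bvEq_symm : ∀ (x y : bSet 𝔹), bvEq x y = bvEq y x
  | ⟨α, A, B⟩, ⟨α', A', B'⟩ => by
    simp only [bvEq]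
    rw [inf_comm]
    congr 1 <;>
    · refine iInf_congr fun a => ?_
      congr 1
      refine iSup_congr fun a' => ?_
      rw [bvEq_symm]

lemma le_of_himp {x a b : 𝔹} (h : x ≤ a ⇨ b) (ha : x ≤ a) : x ≤ b :=
  (le_inf h ha).trans himp_inf_le

lemma bvEq_trans : ∀ (x y z : bSet 𝔹), bvEq x y ⊓ bvEq y z ≤ bvEq x z
  | ⟨α, A, B⟩, ⟨α', A', B'⟩, ⟨α'', A'', B''⟩ => by
    show _ ≤ (⨅ a, B a ⇨ ⨆ a'', B'' a'' ⊓ bvEq (A a) (A'' a'')) ⊓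
        (⨅ a'', B'' a'' ⇨ ⨆ a, B a ⊓ bvEq (A a) (A'' a''))
    refine le_inf (le_iInf fun a => le_himp_iff.mpr ?_)
      (le_iInf fun a'' => le_himp_iff.mpr ?_)
    · have step1 : (bvEq (⟨α, A, B⟩ : bSet 𝔹) ⟨α', A', B'⟩ ⊓
          bvEq (⟨α', A', B'⟩ : bSet 𝔹) ⟨α'', A'', B''⟩) ⊓ B a ≤
          (⨆ a', B' a' ⊓ bvEq (A a) (A' a')) ⊓
            bvEq (⟨α', A', B'⟩ : bSet 𝔹) ⟨α'', A'', B''⟩ :=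
        le_inf (le_of_himp (inf_le_left.trans (inf_le_left.trans (bvEq_le1 a)))
          inf_le_right) (inf_le_left.trans inf_le_right)
      refine step1.trans ?_
      rw [iSup_inf_eq]
      refine iSup_le fun a' => ?_
      have step2 : B' a' ⊓ bvEq (A a) (A' a') ⊓
          bvEq (⟨α', A', B'⟩ : bSet 𝔹) ⟨α'', A'', B''⟩ ≤
          (⨆ a'', B'' a'' ⊓ bvEq (A' a') (A'' a'')) ⊓ bvEq (A a) (A' a') :=
        le_inf (le_of_himp (inf_le_right.trans (bvEq_le1 a'))
          (inf_le_left.trans inf_le_left)) (inf_le_left.trans inf_le_right)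
      refine step2.trans ?_
      rw [iSup_inf_eq]
      refine iSup_le fun a'' => ?_
      refine le_trans ?_ (le_iSup _ a'')
      refine le_inf (inf_le_left.trans inf_le_left) ?_
      refine le_trans ?_ (bvEq_trans (A a) (A' a') (A'' a''))
      exact le_inf inf_le_right (inf_le_left.trans inf_le_right)
    · have step1 : (bvEq (⟨α, A, B⟩ : bSet 𝔹) ⟨α', A', B'⟩ ⊓
          bvEq (⟨α', A', B'⟩ : bSet 𝔹) ⟨α'', A'', B''⟩) ⊓ B'' a'' ≤
          (⨆ a', B' a' ⊓ bvEq (A' a') (A'' a'')) ⊓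
            bvEq (⟨α, A, B⟩ : bSet 𝔹) ⟨α', A', B'⟩ :=
        le_inf (le_of_himp (inf_le_left.trans (inf_le_right.trans (bvEq_le2 a'')))
          inf_le_right) (inf_le_left.trans inf_le_left)
      refine step1.trans ?_
      rw [iSup_inf_eq]
      refine iSup_le fun a' => ?_
      have step2 : B' a' ⊓ bvEq (A' a') (A'' a'') ⊓
          bvEq (⟨α, A, B⟩ : bSet 𝔹) ⟨α', A', B'⟩ ≤
          (⨆ a, B a ⊓ bvEq (A a) (A' a')) ⊓ bvEq (A' a') (A'' a'') :=
        le_inf (le_of_himp (inf_le_right.trans (bvEq_le2 a'))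
          (inf_le_left.trans inf_le_left)) (inf_le_left.trans inf_le_right)
      refine step2.trans ?_
      rw [iSup_inf_eq]
      refine iSup_le fun a => ?_
      refine le_trans ?_ (le_iSup _ a)
      refine le_inf (inf_le_left.trans inf_le_left) ?_
      refine le_trans ?_ (bvEq_trans (A a) (A' a') (A'' a''))
      exact le_inf (inf_le_left.trans inf_le_right) inf_le_right

lemma mem_congr_left {x y : bSet 𝔹} : ∀ (z : bSet 𝔹), bvEq x y ⊓ bvMem x z ≤ bvMem y z
  | ⟨γ, C, c⟩ => by
    show _ ≤ ⨆ a, c a ⊓ bvEq y (C a)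
    rw [show bvMem x (⟨γ, C, c⟩ : bSet 𝔹) = ⨆ a, c a ⊓ bvEq x (C a) from rfl,
      inf_iSup_eq]
    refine iSup_le fun a => le_trans ?_ (le_iSup _ a)
    refine le_inf (inf_le_right.trans inf_le_left) ?_
    refine le_trans ?_ (bvEq_trans y x (C a))
    exact le_inf (inf_le_left.trans (le_of_eq (bvEq_symm x y)))
      (inf_le_right.trans inf_le_right)

lemma subset_spec (w : bSet 𝔹) : ∀ (z x : bSet 𝔹), bvSubset z x ⊓ bvMem w z ≤ bvMem w x
  | ⟨β, Z, c⟩, x => by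
    rw [show bvMem w (⟨β, Z, c⟩ : bSet 𝔹) = ⨆ i, c i ⊓ bvEq w (Z i) from rfl,
      inf_iSup_eq]
    refine iSup_le fun i => ?_
    have h1 : bvSubset (⟨β, Z, c⟩ : bSet 𝔹) x ≤ c i ⇨ bvMem (Z i) x := iInf_le _ i
    refine le_trans ?_ (mem_congr_left (x := Z i) (y := w) x)
    refine le_inf ?_ (le_of_himp (inf_le_left.trans h1) (inf_le_right.trans inf_le_left))
    exact inf_le_right.trans (inf_le_right.trans (le_of_eq (bvEq_symm w (Z i))))

lemma subset_congr : ∀ (z w x : bSet 𝔹), bvEq z w ⊓ bvSubset w x ≤ bvSubset z x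
  | ⟨β, Z, c⟩, ⟨γ, W, d⟩, x => by
    show _ ≤ ⨅ i, c i ⇨ bvMem (Z i) x
    refine le_iInf fun i => le_himp_iff.mpr ?_
    have step1 : (bvEq (⟨β, Z, c⟩ : bSet 𝔹) ⟨γ, W, d⟩ ⊓
        bvSubset (⟨γ, W, d⟩ : bSet 𝔹) x) ⊓ c i ≤
        (⨆ j, d j ⊓ bvEq (Z i) (W j)) ⊓ bvSubset (⟨γ, W, d⟩ : bSet 𝔹) x :=
      le_inf (le_of_himp (inf_le_left.trans (inf_le_left.trans (bvEq_le1 i)))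
        inf_le_right) (inf_le_left.trans inf_le_right)
    refine step1.trans ?_
    rw [iSup_inf_eq]
    refine iSup_le fun j => ?_
    have h1 : bvSubset (⟨γ, W, d⟩ : bSet 𝔹) x ≤ d j ⇨ bvMem (W j) x := iInf_le _ j
    refine le_trans ?_ (mem_congr_left (x := W j) (y := Z i) x)
    refine le_inf ?_ (le_of_himp (inf_le_right.trans h1)
      (inf_le_left.trans inf_le_left))
    exact inf_le_left.trans (inf_le_right.trans (le_of_eq (bvEq_symm (Z i) (W j))))

end bSet


namespace bSet

variable {𝔹 : Type u} [CompleteBooleanAlgebra 𝔹]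

/-- Boolean-valued powerset: indexed by `𝔹`-valued indicator functions on
the underlying type, with truth values given by `⊆ᴮ`. -/
def bvPowerset : bSet 𝔹 → bSet 𝔹
  | ⟨α, A, b⟩ => ⟨α → 𝔹, fun χ => ⟨α, A, χ⟩, fun χ => bvSubset ⟨α, A, χ⟩ ⟨α, A, b⟩⟩

lemma mem_powerset_le : ∀ (x z : bSet 𝔹), bvMem z (bvPowerset x) ≤ bvSubset z x
  | ⟨α, A, b⟩, z => by
    show (⨆ χ : α → 𝔹, bvSubset (⟨α, A, χ⟩ : bSet 𝔹) ⟨α, A, b⟩ ⊓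
        bvEq z ⟨α, A, χ⟩) ≤ _
    refine iSup_le fun χ => ?_
    refine le_trans ?_ (subset_congr z ⟨α, A, χ⟩ ⟨α, A, b⟩)
    exact le_inf inf_le_right inf_le_left

lemma le_mem_powerset : ∀ (x z : bSet 𝔹), bvSubset z x ≤ bvMem z (bvPowerset x)
  | ⟨α, A, b⟩, ⟨β, Z, c⟩ => by
    set x : bSet 𝔹 := ⟨α, A, b⟩ with hx
    set z : bSet 𝔹 := ⟨β, Z, c⟩ with hz
    set χ : α → 𝔹 := fun a => bvMem (A a) z with hχ
    show _ ≤ ⨆ χ' : α → 𝔹, bvSubset (⟨α, A, χ'⟩ : bSet 𝔹) x ⊓ bvEq z ⟨α, A, χ'⟩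
    refine le_trans (le_inf ?_ ?_)
      (le_iSup (fun χ' : α → 𝔹 => bvSubset (⟨α, A, χ'⟩ : bSet 𝔹) x ⊓ bvEq z ⟨α, A, χ'⟩) χ)
    · -- bvSubset z x ≤ bvSubset ⟨α, A, χ⟩ x
      show _ ≤ ⨅ a, χ a ⇨ bvMem (A a) x
      refine le_iInf fun a => le_himp_iff.mpr (subset_spec (A a) z x)
    · -- bvSubset z x ≤ bvEq z ⟨α, A, χ⟩
      show _ ≤ (⨅ i, c i ⇨ ⨆ a, χ a ⊓ bvEq (Z i) (A a)) ⊓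
          (⨅ a, χ a ⇨ ⨆ i, c i ⊓ bvEq (Z i) (A a))
      refine le_inf (le_iInf fun i => le_himp_iff.mpr ?_)
        (le_iInf fun a => le_himp_iff.mpr ?_)
      · have hsub : bvSubset z x ≤ c i ⇨ bvMem (Z i) x :=
          iInf_le (fun i => c i ⇨ bvMem (Z i) x) i
        have step1 : bvSubset z x ⊓ c i ≤ (⨆ a, b a ⊓ bvEq (Z i) (A a)) ⊓ c i :=
          le_inf (le_of_himp (inf_le_left.trans hsub) inf_le_right) inf_le_right
        refine step1.trans ?_
        rw [iSup_inf_eq]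
        refine iSup_le fun a => le_trans ?_
          (le_iSup (fun a => χ a ⊓ bvEq (Z i) (A a)) a)
        refine le_inf ?_ (inf_le_left.trans inf_le_right)
        refine le_trans (le_inf inf_le_right
          (inf_le_left.trans (inf_le_right.trans (le_of_eq (bvEq_symm (Z i) (A a)))))) ?_
        exact le_iSup (fun j => c j ⊓ bvEq (A a) (Z j)) i
      · refine inf_le_right.trans ?_
        show (⨆ i, c i ⊓ bvEq (A a) (Z i)) ≤ _
        exact iSup_mono fun i => inf_le_inf_left _ (le_of_eq (bvEq_symm (A a) (Z i)))

end bSet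

open bSet in
/-- The Boolean-valued powerset satisfies the powerset axiom. -/
theorem bvPowerset_axiom {𝔹 : Type u} [CompleteBooleanAlgebra 𝔹] (x : bSet 𝔹) :
    ∀ Γ : 𝔹, Γ ≤ ⊤ → ∀ z : bSet 𝔹,
      Γ ≤ biimp (bvMem z (bvPowerset x)) (bvSubset z x) := by
  intro Γ _ z
  refine le_inf (le_himp_iff.mpr ?_) (le_himp_iff.mpr ?_)
  · exact inf_le_right.trans (mem_powerset_le x z)
  · exact inf_le_right.trans (le_mem_powerset x z)
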